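/- arXiv:2005.02350 — 2 statements merged into one kernel-verified Lean document; each statement's English description precedes it below -/
import Mathlib

section
/- Let I be a finite type, ψ : I → ℂ an arbitrary vector, and γ the matrix indexed by I with entries γ(y,y') = ψ(y)·conj(ψ(y')). Let A be any complex matrix indexed by I × I, and define the contracted matrix A^{γ̄} indexed by I by A^{γ̄}(x,x') = Σ_{y,y'} A((x,y),(x',y'))·conj(γ(y,y')). Then, with ⊗ₖ the Kronecker product of matrices and 1 the identity matrix indexed by I, the following identity holds between matrices indexed by I × I: (1 ⊗ₖ γ) · A · (1 ⊗ₖ γ) = (1 ⊗ₖ γ) · (A^{γ̄} ⊗ₖ 1). -/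
/-!
A rank-one matrix `γ = u vᵀ` satisfies `γ M γ = (vᵀ M u) γ`. Applied blockwise in the second
tensor factor this gives `(1 ⊗ₖ γ) A (1 ⊗ₖ γ) = A^{γ̄} ⊗ₖ γ`, and the mixed-product rule gives
`(1 ⊗ₖ γ) (A^{γ̄} ⊗ₖ 1) = A^{γ̄} ⊗ₖ γ` as well.
-/

open Kronecker

/-- The contraction of a two-particle kernel `A` against a one-particle matrix `η`:
`A^{η̄}(x,x') = Σ_{y,y'} A((x,y),(x',y'))·conj(η(y,y'))`. -/
noncomputable def contractKernel {I : Type*} [Fintype I]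
    (A : Matrix (I × I) (I × I) ℂ) (η : Matrix I I ℂ) : Matrix I I ℂ :=
  Matrix.of fun x x' => ∑ y : I, ∑ y' : I, A (x, y) (x', y') * starRingEnd ℂ (η y y')

namespace Matrix

variable {R m m' n n' k k' : Type*} [CommSemiring R]
  [Fintype m] [Fintype m'] [Fintype n] [Fintype n'] [DecidableEq m] [DecidableEq m']

def contractSnd (A : Matrix (m × n) (m' × n') R) (v : n → R) (u : n' → R) : Matrix m m' R :=
  of fun x x' => ∑ b, ∑ d, v b * A (x, b) (x', d) * u d

theorem one_kronecker_vecMulVec_mul_mul (A : Matrix (m × n) (m' × n') R)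
    (u : k → R) (v : n → R) (u' : n' → R) (v' : k' → R) :
    ((1 : Matrix m m R) ⊗ₖ vecMulVec u v) * A * ((1 : Matrix m' m' R) ⊗ₖ vecMulVec u' v')
      = contractSnd A v u' ⊗ₖ vecMulVec u v' := by
  ext ⟨x, y⟩ ⟨x', y'⟩
  simp only [mul_apply, kroneckerMap_apply, one_apply, vecMulVec_apply, contractSnd, of_apply,
    Fintype.sum_prod_type, ite_mul, one_mul, zero_mul, mul_ite, mul_zero, Finset.sum_ite_irrel,
    Finset.sum_const_zero, Finset.sum_ite_eq, Finset.sum_ite_eq', Finset.mem_univ, if_true,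
    Finset.sum_mul]
  rw [Finset.sum_comm]
  refine Finset.sum_congr rfl fun b _ => Finset.sum_congr rfl fun d _ => ?_
  ring

end Matrix

open Matrix

theorem contractKernel_vecMulVec_star {I : Type*} [Fintype I]
    (A : Matrix (I × I) (I × I) ℂ) (ψ : I → ℂ) :
    contractKernel A (vecMulVec ψ (star ψ)) = contractSnd A (star ψ) ψ := by
  ext x x'
  simp only [contractKernel, contractSnd, of_apply, vecMulVec_apply, map_mul, Pi.star_apply,
    RCLike.star_def, Complex.conj_conj]
  refine Finset.sum_congr rfl fun b _ => Finset.sum_congr rfl fun d _ => ?_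
  ring

/-- **The key cancellation formula (equation (22) of the paper).**
For an arbitrary vector `ψ : I → ℂ` with rank-one matrix `γ(y,y') = ψ(y)·conj(ψ(y'))`, and an
arbitrary complex matrix `A` indexed by `I × I`, compressing `A` by `γ` in the second variable
replaces `A` by the mean-field operator `A^{γ̄}` acting on the first variable:
`(1 ⊗ₖ γ) · A · (1 ⊗ₖ γ) = (1 ⊗ₖ γ) · (A^{γ̄} ⊗ₖ 1)`. -/
theorem rank_one_compression_cancellation
    {I : Type*} [Fintype I] [DecidableEq I]
    (ψ : I → ℂ) (A : Matrix (I × I) (I × I) ℂ)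
    (γ : Matrix I I ℂ) (hγ : γ = Matrix.of fun y y' => ψ y * starRingEnd ℂ (ψ y')) :
    ((1 : Matrix I I ℂ) ⊗ₖ γ) * A * ((1 : Matrix I I ℂ) ⊗ₖ γ)
      = ((1 : Matrix I I ℂ) ⊗ₖ γ) * ((contractKernel A γ) ⊗ₖ (1 : Matrix I I ℂ)) := by
  obtain rfl : γ = vecMulVec ψ (star ψ) := hγ
  rw [one_kronecker_vecMulVec_mul_mul, ← mul_kronecker_mul, one_mul, mul_one,
    contractKernel_vecMulVec_star]
end

section
/- Let I be a finite type, A a complex matrix indexed by I × I, and η a complex matrix indexed by I. Define A^{η̄}(x,x') = Σ_{y,y'} A((x,y),(x',y'))·conj(η(y,y')). Then for every vector v : I → ℂ one has ‖A^{η̄}·v‖ ≤ ‖A‖_HS · ‖η‖_HS · ‖v‖, where ‖·‖ is the ℓ²-norm on (I → ℂ) and ‖M‖_HS denotes the Frobenius (Hilbert–Schmidt) norm of a matrix M, i.e. the square root of the sum of squared absolute values of its entries. In particular, the ℓ²-operator norm of A^{η̄} is at most ‖A‖_HS·‖η‖_HS. -/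
/-- The Frobenius (Hilbert–Schmidt) norm of a complex matrix: the square root of the sum of
the squared absolute values of all its entries. -/
noncomputable def hsNorm {m n : Type*} [Fintype m] [Fintype n] (M : Matrix m n ℂ) : ℝ :=
  Real.sqrt (∑ i : m, ∑ j : n, Complex.normSq (M i j))

/-- The ℓ²-norm of a vector `v : I → ℂ`. -/
noncomputable def l2Norm {I : Type*} [Fintype I] (v : I → ℂ) : ℝ :=
  Real.sqrt (∑ x : I, Complex.normSq (v x))

/-!
Writing `A^{η̄}(x,x') = Σ_{(y,y')} A((x,y),(x',y')) · conj η(y,y')` as a single sum over pairs,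
Cauchy–Schwarz bounds each entry by `(Σ_{y,y'} |A((x,y),(x',y'))|²) · ‖η‖²_HS`; summing over
`x, x'` gives `‖A^{η̄}‖_HS ≤ ‖A‖_HS ‖η‖_HS`. The operator norm of any matrix is bounded by its
Hilbert–Schmidt norm, again by Cauchy–Schwarz applied row by row.
-/

open Finset

lemma Complex.normSq_sum_mul_le {J : Type*} [Fintype J] (f g : J → ℂ) :
    Complex.normSq (∑ i, f i * g i) ≤
      (∑ i, Complex.normSq (f i)) * ∑ i, Complex.normSq (g i) := by
  simp only [← Complex.sq_norm]
  calc ‖∑ i, f i * g i‖ ^ 2 ≤ (∑ i, ‖f i‖ * ‖g i‖) ^ 2 := by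
        gcongr
        exact (norm_sum_le _ _).trans_eq (by simp only [norm_mul])
    _ ≤ (∑ i, ‖f i‖ ^ 2) * ∑ i, ‖g i‖ ^ 2 := sum_mul_sq_le_sq_mul_sq _ _ _

lemma Real.sqrt_le_sqrt_mul_sqrt_of_le {a b c : ℝ} (hb : 0 ≤ b) (h : a ≤ b * c) :
    Real.sqrt a ≤ Real.sqrt b * Real.sqrt c :=
  (Real.sqrt_le_sqrt h).trans_eq (Real.sqrt_mul hb c)

lemma l2Norm_mulVec_le_hsNorm_mul {m n : Type*} [Fintype m] [Fintype n]
    (M : Matrix m n ℂ) (v : n → ℂ) : l2Norm (M.mulVec v) ≤ hsNorm M * l2Norm v := by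
  refine Real.sqrt_le_sqrt_mul_sqrt_of_le
    (sum_nonneg fun _ _ => sum_nonneg fun _ _ => Complex.normSq_nonneg _) ?_
  rw [sum_mul]
  exact sum_le_sum fun x _ => Complex.normSq_sum_mul_le (M x) v

lemma normSq_contractKernel_apply_le {I : Type*} [Fintype I]
    (A : Matrix (I × I) (I × I) ℂ) (η : Matrix I I ℂ) (x x' : I) :
    Complex.normSq (contractKernel A η x x') ≤
      (∑ y, ∑ y', Complex.normSq (A (x, y) (x', y'))) *
        ∑ y, ∑ y', Complex.normSq (η y y') := by
  have h := Complex.normSq_sum_mul_le (fun p : I × I => A (x, p.1) (x', p.2))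
    (fun p => starRingEnd ℂ (η p.1 p.2))
  simpa only [contractKernel, Matrix.of_apply, Fintype.sum_prod_type, Complex.normSq_conj]
    using h

lemma hsNorm_contractKernel_le {I : Type*} [Fintype I]
    (A : Matrix (I × I) (I × I) ℂ) (η : Matrix I I ℂ) :
    hsNorm (contractKernel A η) ≤ hsNorm A * hsNorm η := by
  refine Real.sqrt_le_sqrt_mul_sqrt_of_le
    (sum_nonneg fun _ _ => sum_nonneg fun _ _ => Complex.normSq_nonneg _) ?_
  calc ∑ x, ∑ x', Complex.normSq (contractKernel A η x x')
      ≤ ∑ x, ∑ x', (∑ y, ∑ y', Complex.normSq (A (x, y) (x', y'))) *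
          ∑ y, ∑ y', Complex.normSq (η y y') :=
        sum_le_sum fun x _ => sum_le_sum fun x' _ => normSq_contractKernel_apply_le A η x x'
    _ = (∑ p : I × I, ∑ q : I × I, Complex.normSq (A p q)) *
          ∑ y, ∑ y', Complex.normSq (η y y') := by
        simp only [← sum_mul, Fintype.sum_prod_type]
        congr 1
        exact sum_congr rfl fun x _ => sum_comm

/-- **Cauchy–Schwarz bound on the mean-field operator.**
For a two-particle kernel `A` and a one-particle matrix `η`, the contracted matrix `A^{η̄}`
satisfies `‖A^{η̄}·v‖ ≤ ‖A‖_HS·‖η‖_HS·‖v‖` for every vector `v`; in particular its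
ℓ²-operator norm is at most `‖A‖_HS·‖η‖_HS`. -/
theorem contractKernel_opNorm_le
    {I : Type*} [Fintype I]
    (A : Matrix (I × I) (I × I) ℂ) (η : Matrix I I ℂ) (v : I → ℂ) :
    l2Norm ((contractKernel A η).mulVec v) ≤ hsNorm A * hsNorm η * l2Norm v :=
  (l2Norm_mulVec_le_hsNorm_mul _ v).trans <|
    mul_le_mul_of_nonneg_right (hsNorm_contractKernel_le A η) (Real.sqrt_nonneg _)
end
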